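/- Let f : ℝ × ℝ^n → ℝ^n, g : ℝ × ℝ^n → ℝ^{n×m} and φ : ℝ × ℝ^n → ℝ^r be infinitely differentiable with r = m. Assume φ has relative degree ρ ∈ ℕ^r with respect to (f,g), and that the r×m matrix Ω_g(t,x), whose k-th row is L_g L_f^{ρ_k−1} φ_k(t,x), is invertible for every (t,x) ∈ ℝ × ℝ^n. Fix t0 < T, x0 ∈ ℝ^n, and real initial values z_k^{(i)}(t0) for k ∈ {1,…,r} and 0 ≤ i ≤ ρ_k − 1 such that φ_k(t0,x0) + z_k(t0)²/2 = 0 and, for every 1 ≤ i ≤ ρ_k − 1, L_f^i φ_k(t0,x0) + z_k(t0)·z_k^{(i)}(t0) + (1/2)·Σ_{j=1}^{i−1} binom(i,j)·z_k^{(i−j)}(t0)·z_k^{(j)}(t0) = 0. Let w : [t0,T] → ℝ^r be Lebesgue integrable, and define z_k^{(i)} : [t0,T] → ℝ by repeated integration: z_k^{(ρ_k−1)}(t) = z_k^{(ρ_k−1)}(t0) + ∫_{t0}^t w_k(s) ds, and z_k^{(i−1)}(t) = z_k^{(i−1)}(t0) + ∫_{t0}^t z_k^{(i)}(s) ds for 1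 ≤ i ≤ ρ_k − 1. Define u : [t0,T] → ℝ^m by u(s) = −Ω_g(s,x(s))^{-1}·( Ω_f(s) + D(z(s))·w(s) ), where D(z(s)) = diag(z_1(s),…,z_r(s)) with z_k(s) := z_k^{(0)}(s), and Ω_f(s) ∈ ℝ^r has k-th entry L_f^{ρ_k} φ_k(s,x(s)) + (1/2)·Σ_{j=1}^{ρ_k−1} binom(ρ_k,j)·z_k^{(ρ_k−j)}(s)·z_k^{(j)}(s). Suppose x : [t0,T] → ℝ^n is continuous, u is integrable on [t0,T], and x(t) = x0 + ∫_{t0}^t ( f(s,x(s)) + g(s,x(s))·u(s) ) ds for all t ∈ [t0,T]. Then φ_k(t,x(t)) ≤ 0 for every t ∈ [t0,T] and every k ∈ {1,…,r}. -/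

import Mathlib

/-!
Fix a component `k` and write `z = z_k`. Along the closed loop consider
`h_i(t) = L_f^i φ_k(t, x(t)) + ½ (z²)^{(i)}(t)` for `i < ρ_k`, with `(z²)^{(i)}` expanded by the
Leibniz rule. Since `L_g L_f^i φ_k = 0` for `i < ρ_k - 1`, we get `h_i' = h_{i+1}`, and the
controller is chosen so that `h_{ρ_k-1}' = 0`. The compatibility conditions on the initial values
say `h_i(t0) = 0` for all `i`, so every `h_i` vanishes; in particular `φ_k + z²/2 ≡ 0`, hence
`φ_k ≤ 0`. As `w` is only integrable, all derivatives are meant in the integral sense, and the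
chain rule for a `C¹` function along an absolutely continuous curve replaces the classical one.
-/

noncomputable section

open Real MeasureTheory Finset

/-- One-step Lie derivative of a scalar function `ψ` along the time-varying vector field `f`:
`L_f ψ (t,x) = (∂ₓ ψ)(t,x) · f(t,x) + (∂ₜ ψ)(t,x)`, expressed as the total (Fréchet)
derivative of `ψ` in the direction `(1, f(t,x))`. -/
def lieF {n : ℕ} (f : ℝ × (Fin n → ℝ) → Fin n → ℝ) (ψ : ℝ × (Fin n → ℝ) → ℝ) :
    ℝ × (Fin n → ℝ) → ℝ :=
  fun p => fderiv ℝ ψ p (1, f p)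

/-- Iterated Lie derivative `L_f^j ψ`, with `L_f^0 ψ = ψ`. -/
def lieFIter {n : ℕ} (f : ℝ × (Fin n → ℝ) → Fin n → ℝ) (ψ : ℝ × (Fin n → ℝ) → ℝ)
    (j : ℕ) : ℝ × (Fin n → ℝ) → ℝ :=
  (lieF f)^[j] ψ

/-- Mixed Lie derivative `L_g ψ (t,x) = (∂ₓ ψ)(t,x) · g(t,x) ∈ ℝ^{1×m}` as a row vector;
the `i`-th component is the derivative of `ψ` in the (space) direction of the `i`-th
column of `g`. -/
def lieG {n m : ℕ} (g : ℝ × (Fin n → ℝ) → Fin n → Fin m → ℝ)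
    (ψ : ℝ × (Fin n → ℝ) → ℝ) : ℝ × (Fin n → ℝ) → Fin m → ℝ :=
  fun p i => fderiv ℝ ψ p (0, fun a => g p a i)

open Set intervalIntegral

theorem AbsolutelyContinuousOnInterval.of_dist_le_mul {X Y : Type*} [PseudoMetricSpace X]
    [PseudoMetricSpace Y] {F : ℝ → X} {G : ℝ → Y} {a b : ℝ}
    (hG : AbsolutelyContinuousOnInterval G a b) (K : ℝ)
    (hFG : ∀ x ∈ uIcc a b, ∀ y ∈ uIcc a b, dist (F x) (F y) ≤ K * dist (G x) (G y)) :
    AbsolutelyContinuousOnInterval F a b := by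
  have hK := Filter.Tendsto.const_mul K hG
  rw [mul_zero] at hK
  refine squeeze_zero' (.of_forall fun E => Finset.sum_nonneg fun i _ => dist_nonneg) ?_ hK
  filter_upwards [Filter.mem_inf_of_right (Filter.mem_principal_self _)] with E hE
  rw [Finset.mul_sum]
  exact Finset.sum_le_sum fun i hi => hFG _ (hE.1 i hi).1 _ (hE.1 i hi).2

section Primitive

variable {E E' : Type*} [NormedAddCommGroup E] [NormedSpace ℝ E]
  [NormedAddCommGroup E'] [NormedSpace ℝ E']

def IsPrimitiveOn (F f : ℝ → E) (a b : ℝ) : Prop :=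
  IntegrableOn f (Icc a b) ∧ ∀ t ∈ Icc a b, F t = F a + ∫ s in a..t, f s

namespace IsPrimitiveOn

variable {F f : ℝ → E} {a b : ℝ}

theorem intervalIntegrable (h : IsPrimitiveOn F f a b) {t : ℝ} (ht : t ∈ Icc a b) :
    IntervalIntegrable f volume a t :=
  (h.1.mono_set (by rw [uIcc_of_le ht.1]; exact Icc_subset_Icc_right ht.2)).intervalIntegrable

theorem continuousOn (h : IsPrimitiveOn F f a b) : ContinuousOn F (Icc a b) := by
  rcases lt_or_ge b a with hba | hab
  · simp [Icc_eq_empty_of_lt hba]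
  have hprim := continuousOn_primitive_interval (h.1.mono_set (uIcc_of_le hab).subset)
  rw [uIcc_of_le hab] at hprim
  exact (continuousOn_const.add hprim).congr h.2

theorem congr {g : ℝ → E} (h : IsPrimitiveOn F f a b) (hfg : EqOn f g (Icc a b)) :
    IsPrimitiveOn F g a b := by
  refine ⟨h.1.congr_fun hfg measurableSet_Icc, fun t ht => ?_⟩
  rw [h.2 t ht, integral_congr fun s hs => hfg ?_]
  rw [uIcc_of_le ht.1] at hs
  exact ⟨hs.1, hs.2.trans ht.2⟩

theorem add {G g : ℝ → E} (hF : IsPrimitiveOn F f a b) (hG : IsPrimitiveOn G g a b) :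
    IsPrimitiveOn (fun t => F t + G t) (fun s => f s + g s) a b := by
  refine ⟨hF.1.add hG.1, fun t ht => ?_⟩
  dsimp only
  rw [integral_add (hF.intervalIntegrable ht) (hG.intervalIntegrable ht), hF.2 t ht, hG.2 t ht]
  abel

theorem sum {ι : Type*} (s : Finset ι) {F f : ι → ℝ → E}
    (h : ∀ i ∈ s, IsPrimitiveOn (F i) (f i) a b) :
    IsPrimitiveOn (fun t => ∑ i ∈ s, F i t) (fun t => ∑ i ∈ s, f i t) a b := by
  refine ⟨integrable_finsetSum s fun i hi => (h i hi).1, fun t ht => ?_⟩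
  rw [integral_finsetSum fun i hi => (h i hi).intervalIntegrable ht, ← Finset.sum_add_distrib]
  exact Finset.sum_congr rfl fun i hi => (h i hi).2 t ht

theorem const_mul {F f : ℝ → ℝ} (c : ℝ) (h : IsPrimitiveOn F f a b) :
    IsPrimitiveOn (fun t => c * F t) (fun s => c * f s) a b := by
  refine ⟨h.1.const_mul c, fun t ht => ?_⟩
  dsimp only
  rw [intervalIntegral.integral_const_mul, h.2 t ht, mul_add]

theorem prodMk [CompleteSpace E] [CompleteSpace E'] {G g : ℝ → E'}
    (hF : IsPrimitiveOn F f a b) (hG : IsPrimitiveOn G g a b) :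
    IsPrimitiveOn (fun t => (F t, G t)) (fun s => (f s, g s)) a b := by
  have hFG : IntegrableOn (fun s => (f s, g s)) (Icc a b) := hF.1.prodMk hG.1
  refine ⟨hFG, fun t ht => ?_⟩
  have hint : IntervalIntegrable (fun s => (f s, g s)) volume a t :=
    (hFG.mono_set (uIcc_of_le ht.1 ▸ Icc_subset_Icc_right ht.2)).intervalIntegrable
  ext
  · simpa [hF.2 t ht] using (ContinuousLinearMap.fst ℝ E E').intervalIntegral_comp_comm hint
  · simpa [hG.2 t ht] using (ContinuousLinearMap.snd ℝ E E').intervalIntegral_comp_comm hint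

theorem comp [CompleteSpace E] {ψ : E → ℝ} (hψ : ContDiff ℝ 1 ψ) (h : IsPrimitiveOn F f a b) :
    IsPrimitiveOn (fun t => ψ (F t)) (fun s => fderiv ℝ ψ (F s) (f s)) a b := by
  have hDψ : ContinuousOn (fun s => fderiv ℝ ψ (F s)) (Icc a b) :=
    (hψ.continuous_fderiv one_ne_zero).comp_continuousOn h.continuousOn
  obtain ⟨C, hC⟩ := isCompact_Icc.exists_bound_of_continuousOn hDψ
  refine ⟨(ContinuousLinearMap.apply ℝ ℝ (E := E)).integrable_of_bilin_of_bdd_right C h.1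
    (hDψ.aestronglyMeasurable measurableSet_Icc) (ae_restrict_of_forall_mem measurableSet_Icc hC),
    fun t ht => ?_⟩
  have hsub : uIcc a t ⊆ Icc a b := uIcc_of_le ht.1 ▸ Icc_subset_Icc_right ht.2
  have hf := h.intervalIntegrable ht
  obtain ⟨K, hK⟩ := hψ.locallyLipschitz.locallyLipschitzOn.exists_lipschitzOnWith_of_compact
    (isCompact_Icc.image_of_continuousOn h.continuousOn)
  -- `ψ` is Lipschitz on the compact curve `F '' [a, b]`, so `ψ ∘ F` inherits absolute continuity
  -- from `x ↦ ∫ s in a..x, ‖f s‖`.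
  have hdist : ∀ x ∈ uIcc a t, ∀ y ∈ uIcc a t, dist (ψ (F x)) (ψ (F y)) ≤
      K * dist (∫ s in a..x, ‖f s‖) (∫ s in a..y, ‖f s‖) := by
    intro x hx y hy
    have hfx := hf.mono_set (uIcc_subset_uIcc left_mem_uIcc hx)
    have hfy := hf.mono_set (uIcc_subset_uIcc left_mem_uIcc hy)
    calc dist (ψ (F x)) (ψ (F y)) ≤ K * dist (F x) (F y) :=
          hK.dist_le_mul _ (mem_image_of_mem _ (hsub hx)) _ (mem_image_of_mem _ (hsub hy))
      _ ≤ K * dist (∫ s in a..x, ‖f s‖) (∫ s in a..y, ‖f s‖) := by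
          gcongr
          rw [dist_eq_norm, h.2 x (hsub hx), h.2 y (hsub hy), add_sub_add_left_eq_sub,
            integral_interval_sub_left hfx hfy, Real.dist_eq,
            integral_interval_sub_left hfx.norm hfy.norm]
          exact norm_integral_le_abs_integral_norm
  have hac : AbsolutelyContinuousOnInterval (fun s => ψ (F s)) a t :=
    (hf.norm.absolutelyContinuousOnInterval_intervalIntegral left_mem_uIcc).of_dist_le_mul K hdist
  rw [← sub_eq_iff_eq_add', ← hac.integral_deriv_eq_sub]
  refine integral_congr_ae ?_
  -- Lebesgue differentiation: `F' = f` almost everywhere.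
  filter_upwards [hf.ae_hasDerivAt_integral, Measure.ae_ne volume t] with s hs hst hsI
  have hFs : HasDerivAt F (f s) s := by
    refine ((hs (uIoc_subset_uIcc hsI) a left_mem_uIcc).const_add (F a)).congr_of_eventuallyEq ?_
    rw [uIoc_of_le ht.1] at hsI
    exact Filter.eventually_of_mem (Ioo_mem_nhds hsI.1 (lt_of_le_of_ne hsI.2 hst))
      fun x hx => h.2 x ⟨hx.1.le, hx.2.le.trans ht.2⟩
  exact ((hψ.differentiable one_ne_zero (F s)).hasFDerivAt.comp_hasDerivAt s hFs).deriv

theorem mul {F f G g : ℝ → ℝ} (hF : IsPrimitiveOn F f a b) (hG : IsPrimitiveOn G g a b) :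
    IsPrimitiveOn (fun t => F t * G t) (fun s => F s * g s + f s * G s) a b := by
  refine ((hF.prodMk hG).comp (ψ := fun p : ℝ × ℝ => p.1 * p.2)
    (contDiff_fst.mul contDiff_snd)).congr fun s _ => ?_
  show fderiv ℝ (fun p : ℝ × ℝ => p.1 * p.2) (F s, G s) (f s, g s) = _
  rw [fderiv_fun_mul differentiableAt_fst differentiableAt_snd, fderiv_fst, fderiv_snd]
  simp only [add_apply, smul_apply, ContinuousLinearMap.coe_fst', ContinuousLinearMap.coe_snd',
    smul_eq_mul]
  ring

theorem eq_left_of_eqOn_zero (h : IsPrimitiveOn F f a b) (hf : EqOn f 0 (Icc a b)) {t : ℝ}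
    (ht : t ∈ Icc a b) : F t = F a := by
  simpa using (h.congr hf).2 t ht

end IsPrimitiveOn

theorem isPrimitiveOn_of_integral_eq {z : ℕ → ℝ → E} {N : ℕ} {a b : ℝ}
    (hN : IntegrableOn (z N) (Icc a b))
    (hz : ∀ i < N, ∀ t ∈ Icc a b, z i t = z i a + ∫ s in a..t, z (i + 1) s) :
    ∀ i < N, IsPrimitiveOn (z i) (z (i + 1)) a b := by
  suffices ∀ d i, i + 1 + d = N → IsPrimitiveOn (z i) (z (i + 1)) a b from
    fun i hi => this (N - (i + 1)) i (by omega)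
  intro d
  induction d with
  | zero => exact fun i hi => ⟨(show N = i + 1 by omega) ▸ hN, hz i (by omega)⟩
  | succ d ih =>
    exact fun i hi => ⟨(ih (i + 1) (by omega)).continuousOn.integrableOn_Icc, hz i (by omega)⟩

theorem eqOn_zero_of_isPrimitiveOn {H H' : ℕ → ℝ → E} {N : ℕ} {a b : ℝ}
    (hH : ∀ i < N, IsPrimitiveOn (H i) (H' i) a b)
    (hstep : ∀ i, i + 1 < N → EqOn (H' i) (H (i + 1)) (Icc a b))
    (htop : EqOn (H' (N - 1)) 0 (Icc a b)) (hinit : ∀ i < N, H i a = 0) :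
    ∀ i < N, EqOn (H i) 0 (Icc a b) := by
  suffices ∀ d i, i + 1 + d = N → EqOn (H i) 0 (Icc a b) from
    fun i hi => this (N - (i + 1)) i (by omega)
  intro d
  induction d with
  | zero =>
    intro i hi t ht
    rw [(hH i (by omega)).eq_left_of_eqOn_zero ((show N - 1 = i by omega) ▸ htop) ht,
      hinit i (by omega), Pi.zero_apply]
  | succ d ih =>
    intro i hi t ht
    rw [(hH i (by omega)).eq_left_of_eqOn_zero (fun s hs => (hstep i (by omega) hs).trans
      (ih (i + 1) (by omega) hs)) ht, hinit i (by omega), Pi.zero_apply]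

end Primitive

/-- If `a j` is the `j`-th derivative of a function `y`, then `leibnizSq a n` is the `n`-th
derivative of `y ^ 2`. -/
def leibnizSq (a : ℕ → ℝ) (n : ℕ) : ℝ :=
  ∑ ij ∈ antidiagonal n, (n.choose ij.1 : ℝ) * (a ij.1 * a ij.2)

theorem leibnizSq_zero (a : ℕ → ℝ) : leibnizSq a 0 = a 0 ^ 2 := by
  simp [leibnizSq, sq]

theorem leibnizSq_succ (a : ℕ → ℝ) (n : ℕ) :
    leibnizSq a (n + 1) = ∑ ij ∈ antidiagonal n,
      (n.choose ij.1 : ℝ) * (a ij.1 * a (ij.2 + 1) + a (ij.1 + 1) * a ij.2) := by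
  rw [leibnizSq, sum_antidiagonal_choose_succ_mul (fun i j => a i * a j), ← sum_add_distrib]
  refine sum_congr rfl fun ij hij => ?_
  rw [← Nat.choose_symm_of_eq_add (mem_antidiagonal.1 hij).symm]
  ring

theorem leibnizSq_of_pos (a : ℕ → ℝ) {n : ℕ} (hn : 0 < n) :
    leibnizSq a n = 2 * (a 0 * a n) + ∑ j ∈ Ico 1 n, (n.choose j : ℝ) * a (n - j) * a j := by
  rw [leibnizSq, Nat.sum_antidiagonal_eq_sum_range_succ_mk, range_eq_Ico,
    sum_eq_sum_Ico_succ_bot (by omega), sum_Ico_succ_top hn]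
  simp only [Nat.choose_zero_right, Nat.choose_self, Nat.sub_zero, Nat.sub_self, Nat.cast_one]
  rw [sum_congr rfl fun j _ => (by ring :
    (n.choose j : ℝ) * (a j * a (n - j)) = n.choose j * a (n - j) * a j)]
  ring

theorem isPrimitiveOn_leibnizSq {z : ℕ → ℝ → ℝ} {N : ℕ} {a b : ℝ}
    (hz : ∀ i < N, IsPrimitiveOn (z i) (z (i + 1)) a b) {n : ℕ} (hn : n < N) :
    IsPrimitiveOn (fun t => leibnizSq (z · t) n) (fun t => leibnizSq (z · t) (n + 1)) a b := by
  simp only [leibnizSq_succ]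
  exact IsPrimitiveOn.sum (antidiagonal n) fun ij hij =>
    have hij := mem_antidiagonal.1 hij
    ((hz ij.1 (by omega)).mul (hz ij.2 (by omega))).const_mul (n.choose ij.1 : ℝ)

theorem leibnizSq_congr {a a' : ℕ → ℝ} {n : ℕ} (h : ∀ j ≤ n, a j = a' j) :
    leibnizSq a n = leibnizSq a' n :=
  sum_congr rfl fun ij hij => by
    have hij := mem_antidiagonal.1 hij
    rw [h ij.1 (by omega), h ij.2 (by omega)]

theorem add_half_leibnizSq_eq_zero {c a : ℕ → ℝ} {ρ : ℕ} (h0 : c 0 + a 0 ^ 2 / 2 = 0)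
    (hpos : ∀ i : ℕ, 1 ≤ i → i ≤ ρ - 1 →
      c i + a 0 * a i + (1 / 2) * ∑ j ∈ Ico 1 i, (i.choose j : ℝ) * a (i - j) * a j = 0) :
    ∀ i < ρ, c i + 1 / 2 * leibnizSq a i = 0 := by
  intro i hi
  rcases Nat.eq_zero_or_pos i with rfl | hi0
  · rw [leibnizSq_zero]
    linarith
  · rw [leibnizSq_of_pos a hi0, ← hpos i hi0 (by omega)]
    ring

theorem lieFIter_succ {n : ℕ} (f : ℝ × (Fin n → ℝ) → Fin n → ℝ) (ψ : ℝ × (Fin n → ℝ) → ℝ)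
    (j : ℕ) : lieFIter f ψ (j + 1) = lieF f (lieFIter f ψ j) :=
  Function.iterate_succ_apply' _ _ _

theorem contDiff_lieFIter {n : ℕ} {f : ℝ × (Fin n → ℝ) → Fin n → ℝ}
    {ψ : ℝ × (Fin n → ℝ) → ℝ} (hf : ContDiff ℝ (⊤ : ℕ∞) f) (hψ : ContDiff ℝ (⊤ : ℕ∞) ψ)
    (j : ℕ) : ContDiff ℝ (⊤ : ℕ∞) (lieFIter f ψ j) := by
  induction j with
  | zero => exact hψ
  | succ j ih =>
    rw [lieFIter_succ]
    exact (ih.fderiv_right (by exact_mod_cast le_rfl)).clm_apply (contDiff_const.prodMk hf)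

def controlAffine {n m : ℕ} (f : ℝ × (Fin n → ℝ) → Fin n → ℝ)
    (g : ℝ × (Fin n → ℝ) → Fin n → Fin m → ℝ) (p : ℝ × (Fin n → ℝ)) (c : Fin m → ℝ) :
    Fin n → ℝ :=
  fun j => f p j + ∑ i, g p j i * c i

theorem fderiv_apply_controlAffine {n m : ℕ} (f : ℝ × (Fin n → ℝ) → Fin n → ℝ)
    (g : ℝ × (Fin n → ℝ) → Fin n → Fin m → ℝ) (ψ : ℝ × (Fin n → ℝ) → ℝ)
    (p : ℝ × (Fin n → ℝ)) (c : Fin m → ℝ) :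
    fderiv ℝ ψ p (1, controlAffine f g p c) = lieF f ψ p + ∑ i, lieG g ψ p i * c i := by
  have hv : ((1 : ℝ), controlAffine f g p c) =
      ((1 : ℝ), f p) + ∑ i, c i • (((0 : ℝ), fun j => g p j i) : ℝ × (Fin n → ℝ)) := by
    ext j
    · simp [Prod.fst_sum]
    · simp [controlAffine, Prod.snd_sum, mul_comm]
  simp only [hv, map_add, map_sum, map_smul, smul_eq_mul, lieF, lieG, mul_comm]

theorem isPrimitiveOn_trajectory {n m : ℕ} {f : ℝ × (Fin n → ℝ) → Fin n → ℝ}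
    {g : ℝ × (Fin n → ℝ) → Fin n → Fin m → ℝ} (hf : Continuous f) (hg : Continuous g)
    {x : ℝ → Fin n → ℝ} {u : ℝ → Fin m → ℝ} {a b : ℝ} (hxc : ContinuousOn x (Icc a b))
    (hu : IntegrableOn u (Icc a b))
    (hx : ∀ t ∈ Icc a b, x t = x a + ∫ s in a..t, controlAffine f g (s, x s) (u s)) :
    IsPrimitiveOn (fun t => (t, x t)) (fun s => (1, controlAffine f g (s, x s) (u s))) a b := by
  have hγ : ContinuousOn (fun s => (s, x s)) (Icc a b) := continuousOn_id.prodMk hxc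
  have hgu : ∀ i, IntegrableOn (fun s => u s i • fun j => g (s, x s) j i) (Icc a b) := fun i =>
    have hui : IntegrableOn (fun s => u s i) (Icc a b) := Integrable.eval hu i
    have hgi : Continuous fun p j => g p j i :=
      continuous_pi fun j => (continuous_apply i).comp ((continuous_apply j).comp hg)
    hui.smul_continuousOn (hgi.comp_continuousOn hγ) isCompact_Icc
  have hv : IntegrableOn (fun s => controlAffine f g (s, x s) (u s)) (Icc a b) :=
    ((hf.comp_continuousOn hγ).integrableOn_Icc.add
      (integrable_finsetSum univ fun i _ => hgu i)).congr_fun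
      (fun s _ => by ext j; simp [controlAffine, mul_comm]) measurableSet_Icc
  exact IsPrimitiveOn.prodMk ⟨integrableOn_const measure_Icc_lt_top.ne, fun t _ => by simp⟩ ⟨hv, hx⟩

theorem isPrimitiveOn_comp_trajectory {n m : ℕ} {f : ℝ × (Fin n → ℝ) → Fin n → ℝ}
    {g : ℝ × (Fin n → ℝ) → Fin n → Fin m → ℝ} {ψ : ℝ × (Fin n → ℝ) → ℝ} (hψ : ContDiff ℝ 1 ψ)
    {x : ℝ → Fin n → ℝ} {u : ℝ → Fin m → ℝ} {a b : ℝ}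
    (hx : IsPrimitiveOn (fun t => (t, x t)) (fun s => (1, controlAffine f g (s, x s) (u s))) a b) :
    IsPrimitiveOn (fun t => ψ (t, x t))
      (fun s => lieF f ψ (s, x s) + ∑ i, lieG g ψ (s, x s) i * u s i) a b :=
  (hx.comp hψ).congr fun s _ => fderiv_apply_controlAffine f g ψ (s, x s) (u s)

theorem constraint_add_half_sq_eq_zero {n m : ℕ} {f : ℝ × (Fin n → ℝ) → Fin n → ℝ}
    {g : ℝ × (Fin n → ℝ) → Fin n → Fin m → ℝ} {ψ : ℝ × (Fin n → ℝ) → ℝ}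
    (hf : ContDiff ℝ (⊤ : ℕ∞) f) (hψ : ContDiff ℝ (⊤ : ℕ∞) ψ) {ρ : ℕ} (hρ : 1 ≤ ρ)
    (hrel : ∀ i : ℕ, i + 2 ≤ ρ → ∀ p, lieG g (lieFIter f ψ i) p = 0)
    {t0 T : ℝ} {x : ℝ → Fin n → ℝ} {u : ℝ → Fin m → ℝ}
    (hx : IsPrimitiveOn (fun t => (t, x t)) (fun s => (1, controlAffine f g (s, x s) (u s))) t0 T)
    {z : ℕ → ℝ → ℝ} (hz : ∀ i < ρ, IsPrimitiveOn (z i) (z (i + 1)) t0 T)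
    (hinit : ∀ i < ρ, lieFIter f ψ i (t0, x t0) + 1 / 2 * leibnizSq (z · t0) i = 0)
    (hcontrol : ∀ s ∈ Icc t0 T, ∑ l, lieG g (lieFIter f ψ (ρ - 1)) (s, x s) l * u s l =
      -(lieFIter f ψ ρ (s, x s) + 1 / 2 * leibnizSq (z · s) ρ)) :
    ∀ t ∈ Icc t0 T, ψ (t, x t) + z 0 t ^ 2 / 2 = 0 := by
  set H : ℕ → ℝ → ℝ := fun i t => lieFIter f ψ i (t, x t) + 1 / 2 * leibnizSq (z · t) i
  set H' : ℕ → ℝ → ℝ := fun i s => lieFIter f ψ (i + 1) (s, x s) +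
    ∑ l, lieG g (lieFIter f ψ i) (s, x s) l * u s l + 1 / 2 * leibnizSq (z · s) (i + 1)
  have hH : ∀ i < ρ, IsPrimitiveOn (H i) (H' i) t0 T := fun i hi => by
    simp only [H, H', lieFIter_succ]
    exact (isPrimitiveOn_comp_trajectory ((contDiff_lieFIter hf hψ i).of_le
      (by exact_mod_cast le_top)) hx).add ((isPrimitiveOn_leibnizSq hz hi).const_mul (1 / 2))
  have hstep : ∀ i, i + 1 < ρ → EqOn (H' i) (H (i + 1)) (Icc t0 T) := fun i hi s _ => by
    simp [H, H', hrel i (by omega)]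
  have htop : EqOn (H' (ρ - 1)) 0 (Icc t0 T) := fun s hs => by
    simp only [H', Nat.sub_add_cancel hρ, hcontrol s hs, Pi.zero_apply]
    ring
  intro t ht
  have h0 := eqOn_zero_of_isPrimitiveOn hH hstep htop hinit 0 hρ ht
  simp only [H, lieFIter, Function.iterate_zero, id, leibnizSq_zero, Pi.zero_apply] at h0
  linarith

/-- The derivatives `z^{(i)}` of the augmented state; the virtual input `v` is `z^{(ρ)}`. -/
def augmentedState (Z : ℕ → ℝ → ℝ) (v : ℝ → ℝ) (ρ i : ℕ) : ℝ → ℝ :=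
  if i < ρ then Z i else v

section AugmentedState

variable {Z : ℕ → ℝ → ℝ} {v : ℝ → ℝ} {ρ : ℕ} {a b : ℝ}

theorem augmentedState_left (z0 : ℕ → ℝ) (hab : a ≤ b)
    (htop : ∀ t ∈ Icc a b, Z (ρ - 1) t = z0 (ρ - 1) + ∫ s in a..t, v s)
    (hstep : ∀ i : ℕ, 1 ≤ i → i ≤ ρ - 1 → ∀ t ∈ Icc a b,
      Z (i - 1) t = z0 (i - 1) + ∫ s in a..t, Z i s) :
    ∀ i < ρ, augmentedState Z v ρ i a = z0 i := by
  intro i hi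
  have ha : a ∈ Icc a b := left_mem_Icc.2 hab
  rw [augmentedState, if_pos hi]
  rcases Nat.lt_or_ge (i + 1) ρ with hi' | hi'
  · simpa using hstep (i + 1) (by omega) (by omega) a ha
  · simpa [show ρ - 1 = i by omega] using htop a ha

theorem isPrimitiveOn_augmentedState (z0 : ℕ → ℝ) (hab : a ≤ b) (hv : IntegrableOn v (Icc a b))
    (htop : ∀ t ∈ Icc a b, Z (ρ - 1) t = z0 (ρ - 1) + ∫ s in a..t, v s)
    (hstep : ∀ i : ℕ, 1 ≤ i → i ≤ ρ - 1 → ∀ t ∈ Icc a b,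
      Z (i - 1) t = z0 (i - 1) + ∫ s in a..t, Z i s) :
    ∀ i < ρ, IsPrimitiveOn (augmentedState Z v ρ i) (augmentedState Z v ρ (i + 1)) a b := by
  refine isPrimitiveOn_of_integral_eq (by simpa [augmentedState] using hv) fun i hi t ht => ?_
  rw [augmentedState_left z0 hab htop hstep i hi, augmentedState, if_pos hi]
  rcases Nat.lt_or_ge (i + 1) ρ with hi' | hi'
  · simpa [augmentedState, hi'] using hstep (i + 1) (by omega) (by omega) t ht
  · simpa [augmentedState, show ρ - 1 = i by omega, show ¬ i + 1 < ρ by omega] using htop t ht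

theorem leibnizSq_augmentedState (hρ : 0 < ρ) (s : ℝ) :
    leibnizSq (augmentedState Z v ρ · s) ρ =
      2 * (Z 0 s * v s) + ∑ j ∈ Ico 1 ρ, (ρ.choose j : ℝ) * Z (ρ - j) s * Z j s := by
  rw [leibnizSq_of_pos _ hρ]
  refine congrArg₂ _ (by simp [augmentedState, hρ]) (sum_congr rfl fun j hj => ?_)
  have hj := mem_Ico.1 hj
  simp [augmentedState, show ρ - j < ρ by omega, hj.2]

end AugmentedState

theorem Matrix.mulVec_eq_neg_of_eq_neg_inv_mulVec {ι R : Type*} [Fintype ι] [DecidableEq ι]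
    [CommRing R] {A : Matrix ι ι R} (hA : IsUnit A) {u b : ι → R} (hu : u = -A⁻¹.mulVec b) :
    A.mulVec u = -b := by
  rw [hu, mulVec_neg, mulVec_mulVec, mul_nonsing_inv _ ((isUnit_iff_isUnit_det A).1 hA),
    one_mulVec]

theorem augmentation_implies_constraint_satisfaction_general
    {n m : ℕ} (f : ℝ × (Fin n → ℝ) → Fin n → ℝ)
    (g : ℝ × (Fin n → ℝ) → Fin n → Fin m → ℝ)
    (φ : ℝ × (Fin n → ℝ) → Fin m → ℝ)   -- `r = m`
    (hf : ContDiff ℝ (⊤ : ℕ∞) f) (hg : ContDiff ℝ (⊤ : ℕ∞) g)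
    (hφ : ContDiff ℝ (⊤ : ℕ∞) φ)
    (ρ : Fin m → ℕ) (hρ : ∀ k, 1 ≤ ρ k)
    -- relative degree of `φ` with respect to `(f,g)`
    (hrel1 : ∀ k : Fin m, ∀ i : ℕ, i + 2 ≤ ρ k →
      ∀ p : ℝ × (Fin n → ℝ), lieG g (lieFIter f (fun q => φ q k) i) p = 0)
    -- `Ω_g(t,x)`, whose `k`-th row is `L_g L_f^{ρ_k - 1} φ_k(t,x)`, is invertible everywhere
    (hΩ : ∀ p : ℝ × (Fin n → ℝ), IsUnit
      ((Matrix.of fun k i => lieG g (lieFIter f (fun q => φ q k) (ρ k - 1)) p i) :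
        Matrix (Fin m) (Fin m) ℝ))
    (t0 T : ℝ) (x0 : Fin n → ℝ)
    -- initial values `z0 k i = z_k^{(i)}(t0)`
    (z0 : Fin m → ℕ → ℝ)
    (hz00 : ∀ k, φ (t0, x0) k + z0 k 0 ^ 2 / 2 = 0)
    (hz0i : ∀ k, ∀ i : ℕ, 1 ≤ i → i ≤ ρ k - 1 →
      lieFIter f (fun q => φ q k) i (t0, x0) + z0 k 0 * z0 k i +
        (1 / 2) * ∑ j ∈ Finset.Ico 1 i, (i.choose j : ℝ) * z0 k (i - j) * z0 k j = 0)
    -- an arbitrary integrable virtual input `w`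
    (w : ℝ → Fin m → ℝ) (hw : IntegrableOn w (Set.Icc t0 T))
    -- `Z k i = z_k^{(i)}`, defined by repeated integration of `w`
    (Z : Fin m → ℕ → ℝ → ℝ)
    (hZtop : ∀ k, ∀ t ∈ Set.Icc t0 T,
      Z k (ρ k - 1) t = z0 k (ρ k - 1) + ∫ s in t0..t, w s k)
    (hZstep : ∀ k, ∀ i : ℕ, 1 ≤ i → i ≤ ρ k - 1 → ∀ t ∈ Set.Icc t0 T,
      Z k (i - 1) t = z0 k (i - 1) + ∫ s in t0..t, Z k i s)
    (x : ℝ → Fin n → ℝ) (hxc : ContinuousOn x (Set.Icc t0 T))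
    -- the controller `u(s) = -Ω_g(s,x(s))⁻¹ ( Ω_f(s) + D(z(s))·w(s) )`
    (u : ℝ → Fin m → ℝ)
    (hu : ∀ s ∈ Set.Icc t0 T, u s =
      -(((Matrix.of fun k i =>
            lieG g (lieFIter f (fun q => φ q k) (ρ k - 1)) (s, x s) i) :
          Matrix (Fin m) (Fin m) ℝ)⁻¹).mulVec
        (fun k => (lieFIter f (fun q => φ q k) (ρ k) (s, x s) +
            (1 / 2) * ∑ j ∈ Finset.Ico 1 (ρ k), ((ρ k).choose j : ℝ) *
              Z k (ρ k - j) s * Z k j s) + Z k 0 s * w s k))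
    (huint : IntegrableOn u (Set.Icc t0 T))
    -- `x` solves the integral equation of the closed loop
    (hx : ∀ t ∈ Set.Icc t0 T, x t = x0 + ∫ s in t0..t,
      (fun a => f (s, x s) a + ∑ i, g (s, x s) a i * u s i)) :
    ∀ t ∈ Set.Icc t0 T, ∀ k, φ (t, x t) k ≤ 0 := by
  intro t ht k
  have hT : t0 ≤ T := ht.1.trans ht.2
  have hx0 : x t0 = x0 := by simpa using hx t0 (left_mem_Icc.2 hT)
  set z := augmentedState (Z k) (w · k) (ρ k)
  have hz0 := augmentedState_left (z0 k) hT (hZtop k) (hZstep k)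
  have hinit : ∀ i < ρ k, lieFIter f (fun q => φ q k) i (t0, x t0) +
      1 / 2 * leibnizSq (z · t0) i = 0 := fun i hi => by
    rw [hx0, leibnizSq_congr fun j hj => hz0 j (by omega)]
    exact add_half_leibnizSq_eq_zero (hz00 k) (hz0i k) i hi
  have hcontrol : ∀ s ∈ Icc t0 T, ∑ l, lieG g (lieFIter f (fun q => φ q k) (ρ k - 1)) (s, x s) l *
      u s l = -(lieFIter f (fun q => φ q k) (ρ k) (s, x s) + 1 / 2 * leibnizSq (z · s) (ρ k)) :=
    fun s hs => by
      have hrow := congrFun (Matrix.mulVec_eq_neg_of_eq_neg_inv_mulVec (hΩ (s, x s)) (hu s hs)) k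
      simp only [Matrix.mulVec, dotProduct, Matrix.of_apply, Pi.neg_apply] at hrow
      rw [hrow, leibnizSq_augmentedState (hρ k)]
      ring
  have key := constraint_add_half_sq_eq_zero hf (contDiff_pi.1 hφ k) (hρ k) (hrel1 k)
    (isPrimitiveOn_trajectory hf.continuous hg.continuous hxc huint (hx0 ▸ hx))
    (isPrimitiveOn_augmentedState (z0 k) hT (Integrable.eval hw k) (hZtop k) (hZstep k))
    hinit hcontrol t ht
  linarith [sq_nonneg (z 0 t)]

/-- **Theorem 1 of the paper.** For any Lebesgue-integrable virtual input `w`, the controller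
`u = -Ω_g⁻¹(Ω_f + D(z)·w)` applied to `ẋ = f + g·u` keeps the state inside the constraint
set `φ(t,x(t)) ≤ 0` on `[t0,T]`. -/
theorem augmentation_implies_constraint_satisfaction
    {n m : ℕ} (f : ℝ × (Fin n → ℝ) → Fin n → ℝ)
    (g : ℝ × (Fin n → ℝ) → Fin n → Fin m → ℝ)
    (φ : ℝ × (Fin n → ℝ) → Fin m → ℝ)   -- `r = m`
    (hf : ContDiff ℝ (⊤ : ℕ∞) f) (hg : ContDiff ℝ (⊤ : ℕ∞) g)
    (hφ : ContDiff ℝ (⊤ : ℕ∞) φ)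
    (ρ : Fin m → ℕ) (hρ : ∀ k, 1 ≤ ρ k)
    -- relative degree of `φ` with respect to `(f,g)`
    (hrel1 : ∀ k : Fin m, ∀ i : ℕ, i + 2 ≤ ρ k →
      ∀ p : ℝ × (Fin n → ℝ), lieG g (lieFIter f (fun q => φ q k) i) p = 0)
    (hrel2 : ∀ k : Fin m, ∀ p : ℝ × (Fin n → ℝ),
      lieG g (lieFIter f (fun q => φ q k) (ρ k - 1)) p ≠ 0)
    -- `Ω_g(t,x)`, whose `k`-th row is `L_g L_f^{ρ_k - 1} φ_k(t,x)`, is invertible everywhere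
    (hΩ : ∀ p : ℝ × (Fin n → ℝ), IsUnit
      ((Matrix.of fun k i => lieG g (lieFIter f (fun q => φ q k) (ρ k - 1)) p i) :
        Matrix (Fin m) (Fin m) ℝ))
    (t0 T : ℝ) (hT : t0 < T) (x0 : Fin n → ℝ)
    -- initial values `z0 k i = z_k^{(i)}(t0)`
    (z0 : Fin m → ℕ → ℝ)
    (hz00 : ∀ k, φ (t0, x0) k + z0 k 0 ^ 2 / 2 = 0)
    (hz0i : ∀ k, ∀ i : ℕ, 1 ≤ i → i ≤ ρ k - 1 →
      lieFIter f (fun q => φ q k) i (t0, x0) + z0 k 0 * z0 k i +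
        (1 / 2) * ∑ j ∈ Finset.Ico 1 i, (i.choose j : ℝ) * z0 k (i - j) * z0 k j = 0)
    -- an arbitrary integrable virtual input `w`
    (w : ℝ → Fin m → ℝ) (hw : IntegrableOn w (Set.Icc t0 T))
    -- `Z k i = z_k^{(i)}`, defined by repeated integration of `w`
    (Z : Fin m → ℕ → ℝ → ℝ)
    (hZtop : ∀ k, ∀ t ∈ Set.Icc t0 T,
      Z k (ρ k - 1) t = z0 k (ρ k - 1) + ∫ s in t0..t, w s k)
    (hZstep : ∀ k, ∀ i : ℕ, 1 ≤ i → i ≤ ρ k - 1 → ∀ t ∈ Set.Icc t0 T,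
      Z k (i - 1) t = z0 k (i - 1) + ∫ s in t0..t, Z k i s)
    (x : ℝ → Fin n → ℝ) (hxc : ContinuousOn x (Set.Icc t0 T))
    -- the controller `u(s) = -Ω_g(s,x(s))⁻¹ ( Ω_f(s) + D(z(s))·w(s) )`
    (u : ℝ → Fin m → ℝ)
    (hu : ∀ s ∈ Set.Icc t0 T, u s =
      -(((Matrix.of fun k i =>
            lieG g (lieFIter f (fun q => φ q k) (ρ k - 1)) (s, x s) i) :
          Matrix (Fin m) (Fin m) ℝ)⁻¹).mulVec
        (fun k => (lieFIter f (fun q => φ q k) (ρ k) (s, x s) +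
            (1 / 2) * ∑ j ∈ Finset.Ico 1 (ρ k), ((ρ k).choose j : ℝ) *
              Z k (ρ k - j) s * Z k j s) + Z k 0 s * w s k))
    (huint : IntegrableOn u (Set.Icc t0 T))
    -- `x` solves the integral equation of the closed loop
    (hx : ∀ t ∈ Set.Icc t0 T, x t = x0 + ∫ s in t0..t,
      (fun a => f (s, x s) a + ∑ i, g (s, x s) a i * u s i)) :
    ∀ t ∈ Set.Icc t0 T, ∀ k, φ (t, x t) k ≤ 0 :=
  augmentation_implies_constraint_satisfaction_general f g φ hf hg hφ ρ hρ hrel1 hΩ t0 T x0 z0 hz00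
    hz0i w hw Z hZtop hZstep x hxc u hu huint hx
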